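/- There is an absolute constant K > 0 such that for every finite simple directed graph G=(V,E), every ρ ∈ (0,1] and every real C > 1, min-seed^{(1)}(G,ρ) ≤ K·C·ρ·|V| + |{v ∈ V : d^in(v) < (1/(Cρ))·ln(e/ρ)}| · ((1/(Cρ))·ln(e/ρ) + 1). -/

import Mathlib

/-- The in-neighborhood of `v` in the directed graph with edge relation `E`. -/
def inNbr {V : Type*} (E : V → V → Prop) (v : V) : Set V := {u | E u v}

/-- One round of the synchronous reversible cascade on a directed graph with edge
relation `E`: `dactive E ρ S k` is the set of active vertices in round `k`. -/
def dactive {V : Type*} (E : V → V → Prop) (ρ : ℝ) (S : Set V) : ℕ → Set V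
  | 0 => S
  | k + 1 =>
      {v | 0 < (inNbr E v).ncard ∧
        ρ * (inNbr E v).ncard ≤ ((inNbr E v ∩ dactive E ρ S k).ncard : ℝ)} ∪
      {v | v ∈ S ∧ (inNbr E v).ncard = 0}

/-- `dminSeed E ρ k` is the minimum number of seeds activating all vertices in round `k`. -/
noncomputable def dminSeed {V : Type*} (E : V → V → Prop) (ρ : ℝ) (k : ℕ) : ℕ :=
  sInf {m | ∃ S : Set V, S.ncard = m ∧ dactive E ρ S k = Set.univ}

/-
Seed every vertex independently with probability `p = 6Cρ` (when `p ≥ 1`, seeding all of `V`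
already works), then repair. A vertex of in-degree `d < T := ln(e/ρ)/(Cρ)` gets its whole
in-neighbourhood and itself added, at cost at most `T + 1`; a vertex of larger in-degree that
received fewer than `ρd` seeded in-neighbours gets `⌈ρd⌉` of them added. By the exponential-moment
bound `P(Bin(d, p) < ρd) ≤ e^{ρd} (1 - p (1 - e⁻¹))^d`, the expected repair cost `(ρd + 1) P` of a
high-degree vertex is at most `ρ`, so the expected total cost is at most `(6C + 1) ρ |V|` plus the
low-degree term, and some seed set costs no more than the expectation.
-/

open Finset

section Bernoulli

variable {V : Type*} [Fintype V] [DecidableEq V]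

/-- The probability of `S` for the random subset of `V` containing each element independently with
probability `p`; sums against it are expectations. -/
def bernoulliWeight (p : ℝ) (S : Finset V) : ℝ := p ^ #S * (1 - p) ^ #Sᶜ

lemma bernoulliWeight_nonneg {p : ℝ} (hp0 : 0 ≤ p) (hp1 : p ≤ 1) (S : Finset V) :
    0 ≤ bernoulliWeight p S :=
  mul_nonneg (pow_nonneg hp0 _) (pow_nonneg (sub_nonneg.2 hp1) _)

lemma sum_bernoulliWeight_mul_prod (p : ℝ) (a : V → ℝ) :
    ∑ S, bernoulliWeight p S * ∏ i ∈ S, a i = ∏ i, (p * a i + (1 - p)) := by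
  rw [prod_add, powerset_univ]
  refine sum_congr rfl fun S _ => ?_
  rw [bernoulliWeight, prod_mul_distrib, prod_const, prod_const, compl_eq_univ_sdiff]
  ring

lemma sum_bernoulliWeight (p : ℝ) : ∑ S : Finset V, bernoulliWeight p S = 1 := by
  simpa using sum_bernoulliWeight_mul_prod (V := V) p 1

lemma sum_bernoulliWeight_mul_card (p : ℝ) :
    ∑ S : Finset V, bernoulliWeight p S * #S = p * Fintype.card V := by
  have hmem (u : V) : ∑ S, bernoulliWeight p S * (if u ∈ S then 1 else 0) = p := by
    have h := sum_bernoulliWeight_mul_prod p fun i => if u = i then 0 else 1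
    simp only [prod_ite_eq, mul_ite, mul_zero, mul_one, ite_add, zero_add, add_sub_cancel,
      mem_univ, if_true] at h
    have hsplit : ∑ S, bernoulliWeight p S * (if u ∈ S then 1 else 0)
        + ∑ S, (if u ∈ S then 0 else bernoulliWeight p S)
        = ∑ S : Finset V, bernoulliWeight p S := by
      rw [← sum_add_distrib]
      exact sum_congr rfl fun S _ => by split_ifs <;> ring
    linarith [sum_bernoulliWeight (V := V) p]
  calc ∑ S : Finset V, bernoulliWeight p S * #S
      = ∑ S : Finset V, ∑ u, bernoulliWeight p S * (if u ∈ S then 1 else 0) := by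
        simp [mul_comm]
    _ = p * Fintype.card V := by
        rw [sum_comm, sum_congr rfl fun u _ => hmem u, sum_const, card_univ, nsmul_eq_mul,
          mul_comm]

lemma sum_bernoulliWeight_mul_pow_card_inter (p t : ℝ) (A : Finset V) :
    ∑ S, bernoulliWeight p S * t ^ #(A ∩ S) = (p * t + (1 - p)) ^ #A := by
  have h := sum_bernoulliWeight_mul_prod p fun i => if i ∈ A then t else 1
  simp only [prod_ite_mem, prod_const, mul_ite, mul_one, ite_add, add_sub_cancel,
    univ_inter] at h
  simpa [inter_comm] using h

lemma sum_bernoulliWeight_card_inter_lt_le {p : ℝ} (hp0 : 0 ≤ p) (hp1 : p ≤ 1)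
    (A : Finset V) (a : ℝ) :
    ∑ S with (#(A ∩ S) : ℝ) < a, bernoulliWeight p S
      ≤ Real.exp a * (p * Real.exp (-1) + (1 - p)) ^ #A := by
  rw [← sum_bernoulliWeight_mul_pow_card_inter, mul_sum, sum_filter]
  refine sum_le_sum fun S _ => ?_
  have hw := bernoulliWeight_nonneg hp0 hp1 S
  split_ifs with hS
  · rw [← Real.exp_nat_mul, ← mul_assoc, mul_comm (Real.exp a), mul_assoc, ← Real.exp_add]
    exact le_mul_of_one_le_right hw (Real.one_le_exp (by linarith))
  · positivity

end Bernoulli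

lemma exists_le_sum_mul {ι : Type*} [Fintype ι] {w : ι → ℝ} (hw₀ : ∀ i, 0 ≤ w i)
    (hw₁ : ∑ i, w i = 1) (f : ι → ℝ) : ∃ i, f i ≤ ∑ i, w i * f i := by
  obtain ⟨i, -, hi⟩ := (concaveOn_id (𝕜 := ℝ) convex_univ).exists_le_of_centerMass
    (fun i _ => hw₀ i) (hw₁ ▸ zero_lt_one) (p := f) (fun _ _ => Set.mem_univ _)
  refine ⟨i, ?_⟩
  simpa [centerMass_eq_of_sum_1 _ _ hw₁] using hi

/-- With `p = 6x` the base satisfies `1 - p (1 - e⁻¹) ≤ e^{-3x}`, which beats the prefactor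
`(ρd + 1) e^{ρd} ≤ e^{2xd}` with `e^{-xd} ≤ ρ / e` to spare. -/
lemma chernoff_tail_mul_le {ρ x : ℝ} {d : ℕ} (hρ : 0 < ρ) (hρx : ρ ≤ x) (hx : 6 * x ≤ 1)
    (hd : Real.log (Real.exp 1 / ρ) ≤ x * d) :
    (ρ * d + 1) * (Real.exp (ρ * d) * (6 * x * Real.exp (-1) + (1 - 6 * x)) ^ d) ≤ ρ := by
  have hinv_e : Real.exp (-1) ≤ 1 / 2 := by
    rw [Real.exp_neg, one_div, inv_le_inv₀ (Real.exp_pos 1) two_pos]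
    linarith [Real.exp_one_gt_d9]
  have hbase0 : 0 ≤ 6 * x * Real.exp (-1) + (1 - 6 * x) :=
    add_nonneg (by have := hρ.trans_le hρx; positivity) (by linarith)
  have hbase : 6 * x * Real.exp (-1) + (1 - 6 * x) ≤ Real.exp (-(3 * x)) := by
    nlinarith [Real.add_one_le_exp (-(3 * x))]
  have hρd : Real.exp (ρ * d) ≤ Real.exp (x * d) := by gcongr
  have hρd1 : ρ * d + 1 ≤ Real.exp (x * d) := (Real.add_one_le_exp _).trans hρd
  calc (ρ * d + 1) * (Real.exp (ρ * d) * (6 * x * Real.exp (-1) + (1 - 6 * x)) ^ d)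
      ≤ Real.exp (x * d) * (Real.exp (x * d) * Real.exp (-(3 * x)) ^ d) := by gcongr
    _ = Real.exp (-(x * d)) := by
        rw [← Real.exp_nat_mul, ← Real.exp_add, ← Real.exp_add]
        ring_nf
    _ ≤ Real.exp (-Real.log (Real.exp 1 / ρ)) := Real.exp_le_exp.2 (by linarith)
    _ = ρ / Real.exp 1 := by
        rw [Real.exp_neg, Real.exp_log (by positivity), inv_div]
    _ ≤ ρ := div_le_self hρ.le (Real.one_le_exp zero_le_one)

section Graph

lemma dminSeed_le_card_of_dactive_eq_univ {V : Type*} (E : V → V → Prop) (ρ : ℝ) {k : ℕ}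
    {S : Finset V} (h : dactive E ρ S k = Set.univ) : dminSeed E ρ k ≤ #S :=
  Nat.sInf_le ⟨S, Set.ncard_coe_finset S, h⟩

variable {V : Type*} [Fintype V]

def inNbrFinset (E : V → V → Prop) [DecidableRel E] (v : V) : Finset V := {u | E u v}

lemma coe_inNbrFinset (E : V → V → Prop) [DecidableRel E] (v : V) :
    (inNbrFinset E v : Set V) = inNbr E v := by
  ext; simp [inNbrFinset, inNbr]

lemma ncard_inNbr (E : V → V → Prop) [DecidableRel E] (v : V) :
    (inNbr E v).ncard = #(inNbrFinset E v) := by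
  rw [← coe_inNbrFinset, Set.ncard_coe_finset]

lemma mem_dactive_one_of [DecidableEq V] {E : V → V → Prop} [DecidableRel E] {ρ : ℝ}
    {S : Finset V} {v : V} (h₀ : inNbrFinset E v = ∅ → v ∈ S)
    (h : ρ * #(inNbrFinset E v) ≤ #(inNbrFinset E v ∩ S)) :
    v ∈ dactive E ρ S 1 := by
  have hinter : (inNbr E v ∩ S).ncard = #(inNbrFinset E v ∩ S) := by
    rw [← coe_inNbrFinset, ← coe_inter, Set.ncard_coe_finset]
  simp only [dactive, Set.mem_union, Set.mem_ofPred_eq, ncard_inNbr, hinter, card_pos,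
    card_eq_zero, mem_coe]
  by_cases hN : inNbrFinset E v = ∅
  · exact Or.inr ⟨h₀ hN, hN⟩
  · exact Or.inl ⟨nonempty_iff_ne_empty.2 hN, h⟩

lemma dminSeed_one_le_fintype_card (E : V → V → Prop) {ρ : ℝ} (hρ : ρ ≤ 1) :
    dminSeed E ρ 1 ≤ Fintype.card V := by
  classical
  refine (dminSeed_le_card_of_dactive_eq_univ E ρ (S := univ) ?_).trans_eq card_univ
  refine Set.eq_univ_of_forall fun v => mem_dactive_one_of (fun _ => mem_univ v) ?_
  rw [inter_univ]
  exact mul_le_of_le_one_left (Nat.cast_nonneg _) hρ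

noncomputable def lowDegree (E : V → V → Prop) [DecidableRel E] (T : ℝ) : Finset V :=
  {v | (#(inNbrFinset E v) : ℝ) < T}

noncomputable def deficient [DecidableEq V] (E : V → V → Prop) [DecidableRel E] (ρ T : ℝ)
    (S : Finset V) : Finset V :=
  {v | T ≤ #(inNbrFinset E v) ∧ (#(inNbrFinset E v ∩ S) : ℝ) < ρ * #(inNbrFinset E v)}

lemma dminSeed_one_le_card_add_repair [DecidableEq V] (E : V → V → Prop) [DecidableRel E]
    {ρ T : ℝ} (hρ0 : 0 ≤ ρ) (hρ1 : ρ ≤ 1) (hT : 0 < T) (S₀ : Finset V) :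
    (dminSeed E ρ 1 : ℝ)
      ≤ #S₀ + ∑ v ∈ deficient E ρ T S₀, (ρ * #(inNbrFinset E v) + 1)
      + #(lowDegree E T) * (T + 1) := by
  set N := inNbrFinset E
  have hceil (v : V) : ⌈ρ * #(N v)⌉₊ ≤ #(N v) :=
    Nat.ceil_le.2 (mul_le_of_le_one_left (Nat.cast_nonneg _) hρ1)
  choose F hFN hFcard using fun v => exists_subset_card_eq (hceil v)
  set S := S₀ ∪ (deficient E ρ T S₀).biUnion F
    ∪ (lowDegree E T).biUnion fun v => insert v (N v)
  have hcount {v : V} {G : Finset V} (hGN : G ⊆ N v) (hGS : G ⊆ S) : #G ≤ #(N v ∩ S) :=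
    card_le_card (subset_inter hGN hGS)
  have hactive : dactive E ρ S 1 = Set.univ := by
    refine Set.eq_univ_of_forall fun v => ?_
    by_cases hlow : v ∈ lowDegree E T
    · have hvS : insert v (N v) ⊆ S :=
        (subset_biUnion_of_mem (fun v => insert v (N v)) hlow).trans subset_union_right
      refine mem_dactive_one_of (fun _ => hvS (mem_insert_self v _)) ?_
      rw [inter_eq_left.2 ((subset_insert v _).trans hvS)]
      exact mul_le_of_le_one_left (Nat.cast_nonneg _) hρ1
    have hTd : T ≤ #(N v) := by simpa [lowDegree] using hlow
    refine mem_dactive_one_of (fun hN => absurd hTd (not_le.2 (by simp [N, hN, hT]))) ?_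
    by_cases hdef : v ∈ deficient E ρ T S₀
    · have hFS : F v ⊆ S :=
        ((subset_biUnion_of_mem _ hdef).trans subset_union_right).trans subset_union_left
      calc ρ * #(N v) ≤ #(F v) := hFcard v ▸ Nat.le_ceil _
        _ ≤ #(N v ∩ S) := by exact_mod_cast hcount (hFN v) hFS
    · have hS₀ : N v ∩ S₀ ⊆ S :=
        inter_subset_right.trans (subset_union_left.trans subset_union_left)
      simp only [deficient, mem_filter, mem_univ, true_and, not_and, not_lt] at hdef
      calc ρ * #(N v) ≤ #(N v ∩ S₀) := hdef hTd
        _ ≤ #(N v ∩ S) := by exact_mod_cast hcount inter_subset_left hS₀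
  have hcard : #S ≤ #S₀ + ∑ v ∈ deficient E ρ T S₀, #(F v)
      + ∑ v ∈ lowDegree E T, #(insert v (N v)) :=
    (card_union_le _ _).trans <| add_le_add
      ((card_union_le _ _).trans (add_le_add le_rfl card_biUnion_le)) card_biUnion_le
  have hFle (v : V) : (#(F v) : ℝ) ≤ ρ * #(N v) + 1 := by
    rw [hFcard v]
    exact (Nat.ceil_lt_add_one (by positivity)).le
  have hlowle : ∀ v ∈ lowDegree E T, (#(insert v (N v)) : ℝ) ≤ T + 1 := by
    intro v hv
    have hlt : (#(N v) : ℝ) < T := by simpa [lowDegree] using hv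
    have hins : (#(insert v (N v)) : ℝ) ≤ #(N v) + 1 := mod_cast card_insert_le v (N v)
    linarith
  calc (dminSeed E ρ 1 : ℝ) ≤ #S := mod_cast dminSeed_le_card_of_dactive_eq_univ E ρ hactive
    _ ≤ #S₀ + ∑ v ∈ deficient E ρ T S₀, (#(F v) : ℝ)
        + ∑ v ∈ lowDegree E T, (#(insert v (N v)) : ℝ) := by exact_mod_cast hcard
    _ ≤ #S₀ + ∑ v ∈ deficient E ρ T S₀, (ρ * #(N v) + 1)
        + ∑ v ∈ lowDegree E T, (T + 1) := by
        gcongr with v hv v hv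
        exacts [hFle v, hlowle v hv]
    _ = _ := by rw [sum_const, nsmul_eq_mul]

lemma sum_bernoulliWeight_mem_deficient_mul_le [DecidableEq V] (E : V → V → Prop)
    [DecidableRel E] {ρ x T : ℝ} (hρ : 0 < ρ) (hρx : ρ ≤ x) (hx : 6 * x ≤ 1)
    (hT : Real.log (Real.exp 1 / ρ) ≤ x * T) (v : V) :
    ∑ S with v ∈ deficient E ρ T S, bernoulliWeight (6 * x) S * (ρ * #(inNbrFinset E v) + 1)
      ≤ ρ := by
  have hp0 : 0 ≤ 6 * x := by have := hρ.trans_le hρx; positivity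
  rw [← sum_mul, mul_comm]
  by_cases hTd : T ≤ #(inNbrFinset E v)
  · simp only [deficient, mem_filter, mem_univ, true_and, hTd]
    calc _ ≤ (ρ * #(inNbrFinset E v) + 1) * (Real.exp (ρ * #(inNbrFinset E v))
          * (6 * x * Real.exp (-1) + (1 - 6 * x)) ^ #(inNbrFinset E v)) := by
          gcongr
          exact sum_bernoulliWeight_card_inter_lt_le hp0 hx _ _
      _ ≤ ρ := chernoff_tail_mul_le hρ hρx hx (hT.trans (by gcongr; linarith))
  · simp [deficient, hTd, hρ.le]

lemma exists_card_add_sum_deficient_le [DecidableEq V] (E : V → V → Prop) [DecidableRel E]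
    {ρ x T : ℝ} (hρ : 0 < ρ) (hρx : ρ ≤ x) (hx : 6 * x ≤ 1)
    (hT : Real.log (Real.exp 1 / ρ) ≤ x * T) :
    ∃ S₀ : Finset V, #S₀ + ∑ v ∈ deficient E ρ T S₀, (ρ * #(inNbrFinset E v) + 1)
      ≤ (6 * x + ρ) * Fintype.card V := by
  set p := 6 * x
  have hp0 : 0 ≤ p := by have := hρ.trans_le hρx; positivity
  set cost : Finset V → ℝ :=
    fun S => #S + ∑ v ∈ deficient E ρ T S, (ρ * #(inNbrFinset E v) + 1)
  have hmean : ∑ S, bernoulliWeight p S * cost S ≤ (6 * x + ρ) * Fintype.card V := by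
    calc ∑ S, bernoulliWeight p S * cost S
        = ∑ S, bernoulliWeight p S * #S + ∑ S, ∑ v ∈ deficient E ρ T S,
            bernoulliWeight p S * (ρ * #(inNbrFinset E v) + 1) := by
          rw [← sum_add_distrib]
          exact sum_congr rfl fun S _ => by rw [← mul_sum, ← mul_add]
      _ = ∑ S, bernoulliWeight p S * #S + ∑ v, ∑ S with v ∈ deficient E ρ T S,
            bernoulliWeight p S * (ρ * #(inNbrFinset E v) + 1) := by
          rw [sum_comm' (t' := univ) (s' := fun v => {S | v ∈ deficient E ρ T S}) (by simp)]
      _ ≤ p * Fintype.card V + ∑ _v : V, ρ := by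
          rw [sum_bernoulliWeight_mul_card]
          gcongr with v
          exact sum_bernoulliWeight_mem_deficient_mul_le E hρ hρx hx hT v
      _ = (6 * x + ρ) * Fintype.card V := by
          rw [sum_const, card_univ, nsmul_eq_mul]
          ring
  obtain ⟨S₀, hS₀⟩ :=
    exists_le_sum_mul (bernoulliWeight_nonneg hp0 hx) (sum_bernoulliWeight p) cost
  exact ⟨S₀, hS₀.trans hmean⟩

end Graph

theorem stmt_8 :
    ∃ K : ℝ, 0 < K ∧
      ∀ (V : Type) [Fintype V] (E : V → V → Prop), Irreflexive E →
        ∀ ρ : ℝ, 0 < ρ → ρ ≤ 1 → ∀ C : ℝ, 1 < C →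
          (dminSeed E ρ 1 : ℝ) ≤ K * C * ρ * (Fintype.card V) +
            (({v : V | ((inNbr E v).ncard : ℝ) <
                1 / (C * ρ) * Real.log (Real.exp 1 / ρ)} : Set V).ncard : ℝ) *
              (1 / (C * ρ) * Real.log (Real.exp 1 / ρ) + 1) := by
  refine ⟨7, by norm_num, fun V _ E _ ρ hρ0 hρ1 C hC => ?_⟩
  classical
  set T := 1 / (C * ρ) * Real.log (Real.exp 1 / ρ)
  have hlog : 1 ≤ Real.log (Real.exp 1 / ρ) := by
    rw [Real.log_div (Real.exp_ne_zero 1) hρ0.ne', Real.log_exp]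
    linarith [Real.log_nonpos hρ0.le hρ1]
  have hT : 0 < T := by positivity
  have hlow : ({v : V | ((inNbr E v).ncard : ℝ) < T} : Set V).ncard = #(lowDegree E T) := by
    rw [← Set.ncard_coe_finset]
    congr
    ext v
    simp [lowDegree, ncard_inNbr]
  have hρC : ρ ≤ C * ρ := le_mul_of_one_le_left hρ0.le hC.le
  have hn : (0 : ℝ) ≤ Fintype.card V := Nat.cast_nonneg _
  rw [hlow]
  rcases le_or_gt 1 (6 * (C * ρ)) with hbig | hsmall
  · have hseed : (dminSeed E ρ 1 : ℝ) ≤ Fintype.card V := by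
      exact_mod_cast dminSeed_one_le_fintype_card E hρ1
    nlinarith
  · obtain ⟨S₀, hS₀⟩ := exists_card_add_sum_deficient_le E hρ0 hρC hsmall.le (T := T)
      (by simp only [T]; field_simp; rfl)
    have hseed := dminSeed_one_le_card_add_repair E hρ0.le hρ1 hT S₀
    nlinarith
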